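/- Suppose 0 < r < 1 and for each n ≥ 0 and each dyadic square Δ of generation n in [0,1]², let s(Δ) be the closed vertical segment of length rₙ·2⁻ⁿ centered at the center of Δ, where rₙ ∈ (0, r]. Then for any two distinct slits s' = s(Δ') and s'' = s(Δ'') (of generations n ≥ m respectively), the relative distance Δ(s', s'') = dist(s', s'')/min{diam(s'), diam(s'')} satisfies Δ(s', s'') ≥ min{1/2, 1−r}. -/

import Mathlib

/-!
Every slit of generation `n` lies on a vertical line `x = (2i+1)/2ⁿ⁺¹`, and for `m ≤ n` the line
of a generation-`m` slit has the same form `x = (2i'+1)2ⁿ⁻ᵐ/2ⁿ⁺¹`. Two distinct lines are thus at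
distance at least `2⁻ⁿ⁻¹`, half the length `2⁻ⁿ` of the generation-`n` square, which bounds the
relative distance below by `1/2` since `rₙ ≤ 1`. Two slits on the same line have the same odd part
`2i+1`, hence the same generation and column; their centers then differ by at least `2⁻ⁿ`, and
removing the two half-lengths leaves a gap of `(1 - rₙ)2⁻ⁿ ≥ (1 - r)·diam`.
-/

/-- The vertical slit of the dyadic square of generation `n` with indices `i, j`:
the closed vertical segment of length `r n / 2 ^ n` centered at the center of the square. -/
noncomputable def slit (r : ℕ → ℝ) (n i j : ℕ) : Set (ℝ × ℝ) :=
  {(((i : ℝ) + 1 / 2) / 2 ^ n)} ×ˢ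
    Set.Icc ((((j : ℝ) + 1 / 2) / 2 ^ n) - r n / 2 ^ (n + 1))
            ((((j : ℝ) + 1 / 2) / 2 ^ n) + r n / 2 ^ (n + 1))

/-- Distance between two subsets of the plane. -/
noncomputable def setDist (A B : Set (ℝ × ℝ)) : ℝ :=
  sInf (Set.image2 dist A B)

open Metric Set

lemma le_setDist {A B : Set (ℝ × ℝ)} (hA : A.Nonempty) (hB : B.Nonempty) {c : ℝ}
    (h : ∀ p ∈ A, ∀ q ∈ B, c ≤ dist p q) : c ≤ setDist A B := by
  refine le_csInf (hA.image2 hB) ?_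
  rintro _ ⟨p, hp, q, hq, rfl⟩
  exact h p hp q hq

lemma diam_singleton_prod_Icc (a : ℝ) {b c : ℝ} (hbc : b ≤ c) :
    diam ({a} ×ˢ Icc b c) = c - b := by
  have hiso : Isometry (fun y : ℝ => (a, y)) :=
    Isometry.of_dist_eq fun y y' => by simp [Prod.dist_eq]
  rw [singleton_prod, hiso.diam_image, Real.diam_Icc hbc]

lemma inv_le_dist_div {a b c : ℝ} (hab : 1 ≤ dist a b) (hc : 0 < c) :
    c⁻¹ ≤ dist (a / c) (b / c) := by
  rw [Real.dist_eq, ← sub_div, abs_div, abs_of_pos hc, ← Real.dist_eq, ← one_div]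
  gcongr

lemma sub_sub_le_dist_of_mem_closedBall {x y a b h h' : ℝ} (hx : x ∈ closedBall a h)
    (hy : y ∈ closedBall b h') : dist a b - h - h' ≤ dist x y := by
  rw [mem_closedBall] at hx hy
  linarith [dist_triangle4 a x y b, dist_comm x a]

lemma eq_of_two_mul_add_one_eq_mul_two_pow {i i' d : ℕ} (h : 2 * i + 1 = (2 * i' + 1) * 2 ^ d) :
    d = 0 ∧ i = i' := by
  rcases d with _ | d
  · exact ⟨rfl, by simpa using h⟩
  · have heven : Even ((2 * i' + 1) * 2 ^ (d + 1)) :=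
      (Nat.even_pow.mpr ⟨even_two, d.succ_ne_zero⟩).mul_left _
    exact absurd (h ▸ heven) (Nat.not_even_iff_odd.mpr (odd_two_mul_add_one i))

section Slit

variable (r : ℕ → ℝ) {n : ℕ} (i j : ℕ)

lemma slit_eq_singleton_prod_closedBall :
    slit r n i j =
      {((i : ℝ) + 1 / 2) / 2 ^ n} ×ˢ closedBall (((j : ℝ) + 1 / 2) / 2 ^ n) (r n / 2 ^ (n + 1)) := by
  rw [slit, Real.closedBall_eq_Icc]

lemma slit_nonempty (hr : 0 ≤ r n) : (slit r n i j).Nonempty := by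
  rw [slit_eq_singleton_prod_closedBall]
  exact (singleton_nonempty _).prod (nonempty_closedBall.mpr (by positivity))

lemma diam_slit (hr : 0 ≤ r n) : diam (slit r n i j) = r n / 2 ^ n := by
  rw [slit, diam_singleton_prod_Icc _ (by linarith [show 0 ≤ r n / 2 ^ (n + 1) by positivity]),
    pow_succ]
  ring

variable {r i j}

lemma slit_center_eq {m : ℕ} (hmn : m ≤ n) :
    ((i : ℝ) + 1 / 2) / 2 ^ m = (((2 * i + 1) * 2 ^ (n - m) : ℕ) : ℝ) / 2 ^ (n + 1) := by
  obtain ⟨d, rfl⟩ := Nat.exists_eq_add_of_le hmn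
  rw [Nat.add_sub_cancel_left]
  push_cast
  field_simp
  ring

lemma inv_two_pow_succ_le_setDist_slit {m i' j' : ℕ} (hmn : m ≤ n)
    (hcol : 2 * i + 1 ≠ (2 * i' + 1) * 2 ^ (n - m)) (hrn : 0 ≤ r n) (hrm : 0 ≤ r m) :
    (2 ^ (n + 1) : ℝ)⁻¹ ≤ setDist (slit r n i j) (slit r m i' j') := by
  refine le_setDist (slit_nonempty r i j hrn) (slit_nonempty r i' j' hrm) fun p hp q hq => ?_
  rw [slit_eq_singleton_prod_closedBall, mem_prod, mem_singleton_iff] at hp hq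
  have hx : (2 ^ (n + 1) : ℝ)⁻¹ ≤ dist p.1 q.1 := by
    rw [hp.1, hq.1, slit_center_eq hmn, slit_center_eq le_rfl, Nat.sub_self, pow_zero, mul_one]
    exact inv_le_dist_div (Nat.pairwise_one_le_dist hcol) (by positivity)
  exact hx.trans ((le_max_left _ _).trans_eq Prod.dist_eq.symm)

lemma one_sub_div_two_pow_le_setDist_slit {j' : ℕ} (hjj : j ≠ j') (hr : 0 ≤ r n) :
    (1 - r n) / 2 ^ n ≤ setDist (slit r n i j) (slit r n i j') := by
  refine le_setDist (slit_nonempty r i j hr) (slit_nonempty r i j' hr) fun p hp q hq => ?_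
  rw [slit_eq_singleton_prod_closedBall, mem_prod] at hp hq
  have hcenter : (2 ^ n : ℝ)⁻¹ ≤ dist (((j : ℝ) + 1 / 2) / 2 ^ n) (((j' : ℝ) + 1 / 2) / 2 ^ n) :=
    inv_le_dist_div (by rw [dist_add_right]; exact Nat.pairwise_one_le_dist hjj) (by positivity)
  have hy := sub_sub_le_dist_of_mem_closedBall hp.2 hq.2
  calc (1 - r n) / 2 ^ n = (2 ^ n : ℝ)⁻¹ - r n / 2 ^ (n + 1) - r n / 2 ^ (n + 1) := by
        rw [pow_succ]; field_simp; ring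
    _ ≤ dist p.2 q.2 := by linarith
    _ ≤ dist p q := (le_max_right _ _).trans_eq Prod.dist_eq.symm

end Slit

theorem stmt_4_general (r : ℕ → ℝ) (rb : ℝ) (hrb : rb < 1)
    (hr : ∀ n, 0 < r n ∧ r n ≤ rb)
    (n m i j i' j' : ℕ) (hmn : m ≤ n)
    (hne : slit r n i j ≠ slit r m i' j') :
    min (1 / 2) (1 - rb) ≤
      setDist (slit r n i j) (slit r m i' j') /
        min (Metric.diam (slit r n i j)) (Metric.diam (slit r m i' j')) := by
  have hr0 k : 0 ≤ r k := (hr k).1.le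
  have hr1 k : r k ≤ 1 := (hr k).2.trans hrb.le
  have hdiam : 0 < r n / 2 ^ n := div_pos (hr n).1 (by positivity)
  rw [diam_slit r i j (hr0 n), diam_slit r i' j' (hr0 m)]
  by_cases hcol : 2 * i + 1 = (2 * i' + 1) * 2 ^ (n - m)
  · obtain ⟨hd, rfl⟩ := eq_of_two_mul_add_one_eq_mul_two_pow hcol
    obtain rfl : n = m := by omega
    have hjj : j ≠ j' := by rintro rfl; exact hne rfl
    rw [min_self, le_div_iff₀ hdiam]
    calc min (1 / 2) (1 - rb) * (r n / 2 ^ n) ≤ (1 - r n) / 2 ^ n := by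
          rw [mul_div_assoc']
          gcongr
          nlinarith [min_le_right (1 / 2 : ℝ) (1 - rb), hr n, hr1 n]
      _ ≤ _ := one_sub_div_two_pow_le_setDist_slit hjj (hr0 n)
  · rw [le_div_iff₀ (lt_min hdiam (div_pos (hr m).1 (by positivity)))]
    calc min (1 / 2) (1 - rb) * min (r n / 2 ^ n) (r m / 2 ^ m)
        ≤ 1 / 2 * (r n / 2 ^ n) :=
          mul_le_mul (min_le_left _ _) (min_le_left _ _)
            (le_min hdiam.le (div_nonneg (hr0 m) (by positivity))) (by norm_num)
      _ ≤ (2 ^ (n + 1) : ℝ)⁻¹ := by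
          rw [pow_succ, mul_inv, ← one_div, ← one_div]
          linarith [div_le_div_of_nonneg_right (hr1 n) (pow_nonneg zero_le_two n)]
      _ ≤ _ := inv_two_pow_succ_le_setDist_slit hmn hcol (hr0 n) (hr0 m)

/-- If all relative slit lengths satisfy `r n ≤ rb < 1`, then any two distinct dyadic
slits have relative distance at least `min (1/2) (1 - rb)`. -/
theorem stmt_4 (r : ℕ → ℝ) (rb : ℝ) (hrb : rb < 1)
    (hr : ∀ n, 0 < r n ∧ r n ≤ rb)
    (n m i j i' j' : ℕ) (hmn : m ≤ n)
    (hi : i < 2 ^ n) (hj : j < 2 ^ n) (hi' : i' < 2 ^ m) (hj' : j' < 2 ^ m)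
    (hne : slit r n i j ≠ slit r m i' j') :
    min (1 / 2) (1 - rb) ≤
      setDist (slit r n i j) (slit r m i' j') /
        min (Metric.diam (slit r n i j)) (Metric.diam (slit r m i' j')) :=
  stmt_4_general r rb hrb hr n m i j i' j' hmn hne
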